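/- Let q be an integer with q ≥ 2, and for k ≥ 0 define c(k) = (1 + q² - 2q^{2k+1}(1+q+q²) + q^{3k+1}(1+q+q²+q³)) / ((q-1)²(1+q+q²)). Then c(k) is an integer for all k ≥ 0 and, as formal power series over ℚ, (1 - (1+q²+q³)t + (q²+q³+q⁵)t² - q⁵t³) · ∑_{k≥0} c(k) t^k = 1 + (q+q²)t + q³t². -/

import Mathlib

/-!
The cubic is `(1 - t)(1 - q²t)(1 - q³t)` and `c(k)` is a linear combination of `1`, `q^{2k}` and
`q^{3k}`, so `c` satisfies the order-three linear recurrence with this characteristic polynomial.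
Multiplying a series whose coefficients satisfy such a recurrence by the cubic leaves a polynomial
of degree at most two, read off from `c(0), c(1), c(2)`.

For integrality, the numerator `N(k)` satisfies
`N(k + 1) - q³ N(k) = -(q - 1)(1 + q + q²)(1 + q² - 2q^{2k+3})`, and the last factor is divisible
by `q - 1` because it vanishes at `q = 1`.
-/

open PowerSeries

namespace PowerSeries

variable {R : Type*} [CommRing R]

theorem cubic_mul_mk_of_recurrence (a b c : R) (f : ℕ → R)
    (hf : ∀ n, f (n + 3) = a * f (n + 2) - b * f (n + 1) + c * f n) :
    (1 - C a * X + C b * X ^ 2 - C c * X ^ 3) * mk f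
      = C (f 0) + C (f 1 - a * f 0) * X + C (f 2 - a * f 1 + b * f 0) * X ^ 2 := by
  have hexpand : (1 - C a * X + C b * X ^ 2 - C c * X ^ 3) * mk f
      = mk f - C a * mk f * X ^ 1 + C b * mk f * X ^ 2 - C c * mk f * X ^ 3 := by ring
  rw [hexpand]
  ext n
  rcases n with _ | _ | _ | n
  all_goals simp [coeff_mul_X_pow', hf]
  all_goals ring

end PowerSeries

namespace Paramodular

section CommRing

variable {R : Type*} [CommRing R]

def indexNumerator (q : R) (k : ℕ) : R :=
  1 + q ^ 2 - 2 * q ^ (2 * k + 1) * (1 + q + q ^ 2) + q ^ (3 * k + 1) * (1 + q + q ^ 2 + q ^ 3)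

def indexDenominator (q : R) : R :=
  (q - 1) ^ 2 * (1 + q + q ^ 2)

theorem indexNumerator_succ (q : R) (k : ℕ) :
    indexNumerator q (k + 1) = q ^ 3 * indexNumerator q k
      - (q - 1) * (1 + q + q ^ 2) * (1 + q ^ 2 - 2 * q ^ (2 * k + 3)) := by
  unfold indexNumerator
  ring

theorem indexDenominator_dvd_indexNumerator (q : R) (k : ℕ) :
    indexDenominator q ∣ indexNumerator q k := by
  induction k with
  | zero => exact ⟨1, by unfold indexNumerator indexDenominator; ring⟩
  | succ k ih =>
    obtain ⟨g, hg⟩ : q - 1 ∣ q ^ (2 * k + 3) - 1 := by simpa using sub_dvd_pow_sub_pow q 1 _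
    rw [indexNumerator_succ]
    refine dvd_sub (dvd_mul_of_dvd_right ih _) ⟨q + 1 - 2 * g, ?_⟩
    unfold indexDenominator
    linear_combination (-2 * (q - 1) * (1 + q + q ^ 2)) * hg

theorem indexNumerator_recurrence (q : R) (n : ℕ) :
    indexNumerator q (n + 3) = (1 + q ^ 2 + q ^ 3) * indexNumerator q (n + 2)
      - (q ^ 2 + q ^ 3 + q ^ 5) * indexNumerator q (n + 1) + q ^ 5 * indexNumerator q n := by
  unfold indexNumerator
  ring

end CommRing

section Field

variable {K : Type*} [Field K]

def indexValue (q : K) (k : ℕ) : K :=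
  indexNumerator q k / indexDenominator q

theorem spinFactor_mul_mk_indexValue (q : K) (hq : indexDenominator q ≠ 0) :
    (1 - C (1 + q ^ 2 + q ^ 3) * X + C (q ^ 2 + q ^ 3 + q ^ 5) * X ^ 2 - C (q ^ 5) * X ^ 3)
      * mk (indexValue q) = 1 + C (q + q ^ 2) * X + C (q ^ 3) * X ^ 2 := by
  rw [cubic_mul_mk_of_recurrence]
  · have h0 : indexValue q 0 = 1 := by
      rw [indexValue, div_eq_one_iff_eq hq, indexNumerator, indexDenominator]
      ring
    have h1 : indexValue q 1 - (1 + q ^ 2 + q ^ 3) * indexValue q 0 = q + q ^ 2 := by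
      simp only [indexValue]
      field_simp
      simp only [indexNumerator, indexDenominator]
      ring
    have h2 : indexValue q 2 - (1 + q ^ 2 + q ^ 3) * indexValue q 1
        + (q ^ 2 + q ^ 3 + q ^ 5) * indexValue q 0 = q ^ 3 := by
      simp only [indexValue]
      field_simp
      simp only [indexNumerator, indexDenominator]
      ring
    rw [h1, h2, h0, map_one]
  · intro n
    simp only [indexValue, indexNumerator_recurrence]
    ring

end Field

end Paramodular

open Paramodular in
/-- The index character values `c(k)` are integers, and their generating
series satisfies the stated rational identity. -/
theorem stmt_13 (q : ℤ) (hq : 2 ≤ q) :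
    (∀ k : ℕ, ((q - 1) ^ 2 * (1 + q + q ^ 2)) ∣
      (1 + q ^ 2 - 2 * q ^ (2 * k + 1) * (1 + q + q ^ 2)
        + q ^ (3 * k + 1) * (1 + q + q ^ 2 + q ^ 3))) ∧
    (1 - PowerSeries.C (1 + (q : ℚ) ^ 2 + (q : ℚ) ^ 3) * X
        + PowerSeries.C ((q : ℚ) ^ 2 + (q : ℚ) ^ 3 + (q : ℚ) ^ 5) * X ^ 2
        - PowerSeries.C ((q : ℚ) ^ 5) * X ^ 3)
      * (PowerSeries.mk fun k : ℕ =>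
          ((1 + (q : ℚ) ^ 2 - 2 * (q : ℚ) ^ (2 * k + 1) * (1 + (q : ℚ) + (q : ℚ) ^ 2)
            + (q : ℚ) ^ (3 * k + 1) * (1 + (q : ℚ) + (q : ℚ) ^ 2 + (q : ℚ) ^ 3))
            / (((q : ℚ) - 1) ^ 2 * (1 + (q : ℚ) + (q : ℚ) ^ 2))))
    = 1 + PowerSeries.C ((q : ℚ) + (q : ℚ) ^ 2) * X
        + PowerSeries.C ((q : ℚ) ^ 3) * X ^ 2 := by
  have hD : indexDenominator (q : ℚ) ≠ 0 := by
    have : (1 : ℚ) < q := by exact_mod_cast hq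
    unfold indexDenominator
    exact mul_ne_zero (pow_ne_zero _ (sub_ne_zero.mpr this.ne')) (by positivity)
  exact ⟨indexDenominator_dvd_indexNumerator q, spinFactor_mul_mk_indexValue (q : ℚ) hD⟩
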